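/- arXiv:2412.15764 — 14 statements merged into one kernel-verified Lean document; each statement's English description precedes it below -/
import Mathlib

section
/- If the Sasaki operations x⊙y = (x∨y')∧y and x→y = x'∨(x∧y) form an adjoint pair on a bounded lattice L with unary operation ', i.e., x⊙y ≤ z iff x ≤ y→z for all x,y,z, then ' is a complementation: a∨a' = 1 and a∧a' = 0 for all a ∈ L. -/
theorem sasaki_adjoint_implies_complementation
    {L : Type*} [Lattice L] [BoundedOrder L] (c : L → L)
    (adj : ∀ x y z : L, (x ⊔ c y) ⊓ y ≤ z ↔ x ≤ c y ⊔ (y ⊓ z)) :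
    ∀ a : L, a ⊔ c a = ⊤ ∧ a ⊓ c a = ⊥ := by
  intro a
  constructor
  · have h := (adj ⊤ a ⊤).mp le_top
    simp only [inf_top_eq] at h
    rw [sup_comm]
    exact top_le_iff.mp h
  · have h := (adj ⊥ a ⊥).mpr bot_le
    simp only [bot_sup_eq] at h
    rw [inf_comm]
    exact le_bot_iff.mp h
end

section
/- In a bounded complemented lattice L with complementation ', the implication 'x⊙y ≤ z implies x ≤ y→z for all x,y,z' holds if and only if L satisfies the identity x∨y' = y'∨((x∨y')∧y). -/
theorem sasaki_half_adjoint_iff_identity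
    {L : Type*} [Lattice L] [BoundedOrder L] (c : L → L)
    (compl_sup : ∀ x : L, x ⊔ c x = ⊤) (compl_inf : ∀ x : L, x ⊓ c x = ⊥) :
    (∀ x y z : L, (x ⊔ c y) ⊓ y ≤ z → x ≤ c y ⊔ (y ⊓ z)) ↔
      (∀ x y : L, x ⊔ c y = c y ⊔ ((x ⊔ c y) ⊓ y)) := by
  constructor
  · intro h x y
    have hx := h x y ((x ⊔ c y) ⊓ y) le_rfl
    rw [inf_of_le_right (inf_le_right : (x ⊔ c y) ⊓ y ≤ y)] at hx
    exact le_antisymm (sup_le hx (le_sup_left)) (sup_le le_sup_right inf_le_left)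
  · intro h x y z hz
    calc x ≤ x ⊔ c y := le_sup_left
      _ = c y ⊔ ((x ⊔ c y) ⊓ y) := h x y
      _ ≤ c y ⊔ (y ⊓ z) := sup_le_sup_left (le_inf inf_le_right hz) _
end

section
/- In a bounded complemented lattice L with complementation ', the identity x∨y' = y'∨((x∨y')∧y) holds for all x,y if and only if for all x,y: x' ≤ y implies y = x'∨(y∧x). -/
theorem identity_b_iff_condition_c
    {L : Type*} [Lattice L] [BoundedOrder L] (c : L → L)
    (compl_sup : ∀ x : L, x ⊔ c x = ⊤) (compl_inf : ∀ x : L, x ⊓ c x = ⊥) :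
    (∀ x y : L, x ⊔ c y = c y ⊔ ((x ⊔ c y) ⊓ y)) ↔
      (∀ x y : L, c x ≤ y → y = c x ⊔ (y ⊓ x)) := by
  constructor
  · intro h x y hxy
    have := h y x
    rwa [sup_eq_left.mpr hxy] at this
  · intro h x y
    exact h y (x ⊔ c y) le_sup_right
end

section
/- In a bounded complemented lattice L with complementation ', the implication 'x ≤ y→z implies x⊙y ≤ z for all x,y,z' holds if and only if L satisfies the identity x∧y = x∧((x∧y)∨x'). -/
theorem sasaki_other_half_adjoint_iff_identity
    {L : Type*} [Lattice L] [BoundedOrder L] (c : L → L)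
    (compl_sup : ∀ x : L, x ⊔ c x = ⊤) (compl_inf : ∀ x : L, x ⊓ c x = ⊥) :
    (∀ x y z : L, x ≤ c y ⊔ (y ⊓ z) → (x ⊔ c y) ⊓ y ≤ z) ↔
      (∀ x y : L, x ⊓ y = x ⊓ ((x ⊓ y) ⊔ c x)) := by
  constructor
  · intro h x y
    apply le_antisymm
    · exact le_inf inf_le_left (le_sup_left)
    · have := h (x ⊓ y) x (x ⊓ y) (le_sup_of_le_right (le_inf inf_le_left le_rfl))
      calc x ⊓ ((x ⊓ y) ⊔ c x) = ((x ⊓ y) ⊔ c x) ⊓ x := inf_comm ..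
        _ ≤ x ⊓ y := this
  · intro h x y z hx
    have h1 : (x ⊔ c y) ⊓ y ≤ ((y ⊓ z) ⊔ c y) ⊓ y := by
      refine inf_le_inf_right y (sup_le (hx.trans ?_) le_sup_right)
      exact sup_le le_sup_right le_sup_left
    have h2 : ((y ⊓ z) ⊔ c y) ⊓ y = y ⊓ z := by
      rw [inf_comm, ← h y z]
    exact h1.trans (h2.le.trans inf_le_right)
end

section
/- In a bounded complemented lattice L with complementation ', the identity x∧y = x∧((x∧y)∨x') holds for all x,y if and only if for all x,y: x ≤ y implies x = (y'∨x)∧y. -/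
theorem identity_e_iff_condition_f
    {L : Type*} [Lattice L] [BoundedOrder L] (c : L → L)
    (compl_sup : ∀ x : L, x ⊔ c x = ⊤) (compl_inf : ∀ x : L, x ⊓ c x = ⊥) :
    (∀ x y : L, x ⊓ y = x ⊓ ((x ⊓ y) ⊔ c x)) ↔
      (∀ x y : L, x ≤ y → x = (c y ⊔ x) ⊓ y) := by
  constructor
  · intro E x y hxy
    have h := E y x
    rw [inf_eq_right.mpr hxy] at h
    rw [sup_comm, inf_comm]
    exact h
  · intro F x y
    have h := F (x ⊓ y) x inf_le_left
    conv_lhs => rw [h]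
    rw [sup_comm, inf_comm]
end

section
/- In a bounded complemented lattice L with complementation ', the Sasaki operations form an adjoint pair if and only if L satisfies both identities x∨y' = y'∨((x∨y')∧y) and x∧y = x∧((x∧y)∨x'). -/
theorem sasaki_adjoint_iff_two_identities
    {L : Type*} [Lattice L] [BoundedOrder L] (c : L → L)
    (compl_sup : ∀ x : L, x ⊔ c x = ⊤) (compl_inf : ∀ x : L, x ⊓ c x = ⊥) :
    (∀ x y z : L, (x ⊔ c y) ⊓ y ≤ z ↔ x ≤ c y ⊔ (y ⊓ z)) ↔
      ((∀ x y : L, x ⊔ c y = c y ⊔ ((x ⊔ c y) ⊓ y)) ∧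
       (∀ x y : L, x ⊓ y = x ⊓ ((x ⊓ y) ⊔ c x))) := by
  constructor
  · intro adj
    constructor
    · intro x y
      apply le_antisymm
      · have hx : x ≤ c y ⊔ (y ⊓ ((x ⊔ c y) ⊓ y)) := (adj x y _).mp le_rfl
        have : y ⊓ ((x ⊔ c y) ⊓ y) ≤ (x ⊔ c y) ⊓ y := inf_le_right
        exact sup_le (hx.trans (sup_le_sup_left this _)) le_sup_left
      · exact sup_le le_sup_right inf_le_left
    · intro x y
      apply le_antisymm
      · exact le_inf inf_le_left (le_sup_left)
      · have h1 : c x ⊔ (x ⊓ y) ≤ c x ⊔ (x ⊓ y) := le_rfl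
        have h2 : ((c x ⊔ (x ⊓ y)) ⊔ c x) ⊓ x ≤ y := (adj _ x y).mpr h1
        have h3 : x ⊓ ((x ⊓ y) ⊔ c x) ≤ ((c x ⊔ (x ⊓ y)) ⊔ c x) ⊓ x := by
          rw [sup_comm (x ⊓ y) (c x)]
          exact le_inf (inf_le_right.trans le_sup_left) inf_le_left
        exact le_inf inf_le_left (h3.trans h2)
  · rintro ⟨id1, id2⟩ x y z
    constructor
    · intro h
      have hx : x ≤ c y ⊔ ((x ⊔ c y) ⊓ y) := le_sup_left.trans (id1 x y).le
      have : (x ⊔ c y) ⊓ y ≤ y ⊓ z := le_inf inf_le_right h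
      exact hx.trans (sup_le_sup_left this _)
    · intro h
      have h1 : x ⊔ c y ≤ c y ⊔ (y ⊓ z) := sup_le h le_sup_left
      have h2 : (x ⊔ c y) ⊓ y ≤ (c y ⊔ (y ⊓ z)) ⊓ y := inf_le_inf_right _ h1
      have h3 : y ⊓ ((y ⊓ z) ⊔ c y) = y ⊓ z := (id2 y z).symm
      calc (x ⊔ c y) ⊓ y ≤ (c y ⊔ (y ⊓ z)) ⊓ y := h2
        _ = y ⊓ ((y ⊓ z) ⊔ c y) := by rw [inf_comm, sup_comm]
        _ = y ⊓ z := h3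
        _ ≤ z := inf_le_right
end

section
/- Every bounded complemented modular lattice satisfies the identities y'∨(y∧(x∨y')) = x∨y' and ((x∧y)∨x')∧x = x∧y; hence the Sasaki operations form an adjoint pair on every complemented modular lattice. -/
theorem complemented_modular_lattice_in_V
    {L : Type*} [Lattice L] [BoundedOrder L] [IsModularLattice L] (c : L → L)
    (compl_sup : ∀ x : L, x ⊔ c x = ⊤) (compl_inf : ∀ x : L, x ⊓ c x = ⊥) :
    (∀ x y : L, c y ⊔ (y ⊓ (x ⊔ c y)) = x ⊔ c y) ∧
    (∀ x y : L, ((x ⊓ y) ⊔ c x) ⊓ x = x ⊓ y) ∧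
    (∀ x y z : L, (x ⊔ c y) ⊓ y ≤ z ↔ x ≤ c y ⊔ (y ⊓ z)) := by
  have h1 : ∀ x y : L, c y ⊔ (y ⊓ (x ⊔ c y)) = x ⊔ c y := by
    intro x y
    rw [← sup_inf_assoc_of_le y (le_sup_right : c y ≤ x ⊔ c y),
      sup_comm (c y) y, compl_sup, top_inf_eq]
  have h2 : ∀ x y : L, ((x ⊓ y) ⊔ c x) ⊓ x = x ⊓ y := by
    intro x y
    rw [sup_inf_assoc_of_le (c x) (inf_le_left : x ⊓ y ≤ x),
      inf_comm (c x) x, compl_inf, sup_bot_eq]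
  refine ⟨h1, h2, fun x y z => ⟨fun h => ?_, fun h => ?_⟩⟩
  · calc x ≤ x ⊔ c y := le_sup_left
      _ = c y ⊔ (y ⊓ (x ⊔ c y)) := (h1 x y).symm
      _ ≤ c y ⊔ (y ⊓ z) := sup_le_sup_left
          (le_inf inf_le_left (by rwa [inf_comm] at h)) _
  · calc (x ⊔ c y) ⊓ y ≤ ((c y ⊔ (y ⊓ z)) ⊔ c y) ⊓ y :=
          inf_le_inf_right _ (sup_le_sup_right h _)
      _ = ((y ⊓ z) ⊔ c y) ⊓ y := by rw [sup_comm (c y) (y ⊓ z), sup_assoc, sup_idem]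
      _ = y ⊓ z := h2 y z
      _ ≤ z := inf_le_right
end

section
/- The variety V of bounded complemented lattices on which the Sasaki operations form an adjoint pair is congruence permutable: the term p(x,y,z) := (x∧((z∧y)∨y'))∨(z∧((x∧y)∨y')) is a Mal'cev term, i.e., in every member of V it satisfies p(x,x,z) = z and p(x,z,z) = x. -/
theorem V_congruence_permutable_malcev_term
    {L : Type*} [Lattice L] [BoundedOrder L] (c : L → L)
    (compl_sup : ∀ x : L, x ⊔ c x = ⊤) (compl_inf : ∀ x : L, x ⊓ c x = ⊥)
    (id_b : ∀ x y : L, x ⊔ c y = c y ⊔ ((x ⊔ c y) ⊓ y))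
    (id_e : ∀ x y : L, x ⊓ y = x ⊓ ((x ⊓ y) ⊔ c x)) :
    (∀ x z : L, (x ⊓ ((z ⊓ x) ⊔ c x)) ⊔ (z ⊓ ((x ⊓ x) ⊔ c x)) = z) ∧
    (∀ x z : L, (x ⊓ ((z ⊓ z) ⊔ c z)) ⊔ (z ⊓ ((x ⊓ z) ⊔ c z)) = x) := by
  constructor
  · intro x z
    have h1 : x ⊓ ((z ⊓ x) ⊔ c x) = x ⊓ z := by
      rw [inf_comm z x]; exact (id_e x z).symm
    rw [h1, inf_idem, compl_sup, inf_top_eq, sup_comm]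
    exact sup_eq_left.mpr inf_le_right
  · intro x z
    have h1 : z ⊓ ((x ⊓ z) ⊔ c z) = z ⊓ x := by
      rw [inf_comm x z]; exact (id_e z x).symm
    rw [h1, inf_idem, compl_sup, inf_top_eq]
    exact sup_eq_left.mpr inf_le_right
end

section
/- Let L be a bounded complemented lattice satisfying the identities defining V. Define t₁(x,y) := (x∧y)∨(x∨y)' and t₂(x,y,z) := ((x∧y)∨(x∨y)')∧z and t₃(x,y,z) := ((x∧y)∨(x∨y)')'∨z. Then for all x,y,z ∈ L: t₂(x,y,z) = z and t₃(x,y,z) = z if and only if x = y. Hence V is a regular variety. -/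
theorem V_regular_terms
    {L : Type*} [Lattice L] [BoundedOrder L] (c : L → L)
    (compl_sup : ∀ x : L, x ⊔ c x = ⊤) (compl_inf : ∀ x : L, x ⊓ c x = ⊥)
    (id_b : ∀ x y : L, x ⊔ c y = c y ⊔ ((x ⊔ c y) ⊓ y))
    (id_e : ∀ x y : L, x ⊓ y = x ⊓ ((x ⊓ y) ⊔ c x)) :
    ∀ x y z : L,
      (((x ⊓ y) ⊔ c (x ⊔ y)) ⊓ z = z ∧ c ((x ⊓ y) ⊔ c (x ⊔ y)) ⊔ z = z) ↔ x = y := by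
  intro x y z
  constructor
  · rintro ⟨h1, h2⟩
    set t := (x ⊓ y) ⊔ c (x ⊔ y) with ht
    -- c t ≤ z ≤ t, hence t = ⊤
    have hzt : z ≤ t := by rw [← h1]; exact inf_le_left
    have hct : c t ≤ z := by rw [← h2]; exact le_sup_left
    have htop : t = ⊤ := by
      have := compl_sup t
      rw [sup_eq_left.mpr (hct.trans hzt)] at this
      exact this
    -- id_e with u = x ⊔ y, v = x ⊓ y
    have key := id_e (x ⊔ y) (x ⊓ y)
    have hle : (x ⊔ y) ⊓ (x ⊓ y) = x ⊓ y :=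
      inf_eq_right.mpr (le_trans inf_le_left le_sup_left)
    rw [hle] at key
    rw [← ht, htop, inf_top_eq] at key
    -- key : x ⊓ y = x ⊔ y
    have hx : x ≤ y := le_trans (le_sup_left.trans key.symm.le) inf_le_right
    have hy : y ≤ x := le_trans (le_sup_right.trans key.symm.le) inf_le_left
    exact le_antisymm hx hy
  · rintro rfl
    have ht : (x ⊓ x) ⊔ c (x ⊔ x) = ⊤ := by
      rw [inf_idem, sup_idem, compl_sup]
    rw [ht]
    have hcb : c (⊤ : L) = ⊥ := by
      have := compl_inf (⊤ : L)
      rwa [top_inf_eq] at this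
    rw [hcb]
    exact ⟨top_inf_eq z, bot_sup_eq z⟩
end

section
/- In every member of V, defining t₁(x,y) := (x∧y)∨(x∨y)' and t(x,y,z) := (((((x∨y)∧z)'∨x)∧(x∨y))'∨x)∧(((x∨y)∧z)'∨y)∧(x∨y), the identities t₁(x,x) = 1, t(x,y,t₁(x,y)) = x, and t(x,y,1) = y hold. -/
theorem V_weak_regularity_terms
    {L : Type*} [Lattice L] [BoundedOrder L] (c : L → L)
    (compl_sup : ∀ x : L, x ⊔ c x = ⊤) (compl_inf : ∀ x : L, x ⊓ c x = ⊥)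
    (id_b : ∀ x y : L, x ⊔ c y = c y ⊔ ((x ⊔ c y) ⊓ y))
    (id_e : ∀ x y : L, x ⊓ y = x ⊓ ((x ⊓ y) ⊔ c x)) :
    let t1 : L → L → L := fun x y => (x ⊓ y) ⊔ c (x ⊔ y)
    let t : L → L → L → L := fun x y z =>
      (c ((c ((x ⊔ y) ⊓ z) ⊔ x) ⊓ (x ⊔ y)) ⊔ x) ⊓ (c ((x ⊔ y) ⊓ z) ⊔ y) ⊓ (x ⊔ y)
    (∀ x : L, t1 x x = ⊤) ∧
    (∀ x y : L, t x y (t1 x y) = x) ∧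
    (∀ x y : L, t x y ⊤ = y) := by
  intro t1 t
  -- key fact: if x ≤ z then z ⊓ (x ⊔ c z) = x
  have star : ∀ x z : L, x ≤ z → z ⊓ (x ⊔ c z) = x := by
    intro x z hxz
    have h := id_e z x
    rw [inf_eq_right.mpr hxz] at h
    exact h.symm
  have star' : ∀ x z : L, x ≤ z → (c z ⊔ x) ⊓ z = x := by
    intro x z hxz
    rw [sup_comm, inf_comm]; exact star x z hxz
  -- if m ≤ x then c m ⊔ x = ⊤
  have topl : ∀ m x : L, m ≤ x → c m ⊔ x = ⊤ := by
    intro m x hmx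
    have : (⊤ : L) ≤ c m ⊔ x := by
      calc (⊤ : L) = m ⊔ c m := (compl_sup m).symm
        _ ≤ x ⊔ c m := sup_le_sup_right hmx _
        _ = c m ⊔ x := sup_comm _ _
    exact le_antisymm le_top this
  refine ⟨?_, ?_, ?_⟩
  · intro x
    simp only [t1, inf_idem, sup_idem, compl_sup]
  · intro x y
    show (c ((c ((x ⊔ y) ⊓ t1 x y) ⊔ x) ⊓ (x ⊔ y)) ⊔ x) ⊓ (c ((x ⊔ y) ⊓ t1 x y) ⊔ y) ⊓ (x ⊔ y) = x
    have h1 : (x ⊔ y) ⊓ t1 x y = x ⊓ y := by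
      show (x ⊔ y) ⊓ ((x ⊓ y) ⊔ c (x ⊔ y)) = x ⊓ y
      exact star (x ⊓ y) (x ⊔ y) (inf_le_left.trans le_sup_left)
    rw [h1, topl (x ⊓ y) x inf_le_left, topl (x ⊓ y) y inf_le_right, top_inf_eq,
      inf_top_eq, star' x (x ⊔ y) le_sup_left]
  · intro x y
    show (c ((c ((x ⊔ y) ⊓ ⊤) ⊔ x) ⊓ (x ⊔ y)) ⊔ x) ⊓ (c ((x ⊔ y) ⊓ ⊤) ⊔ y) ⊓ (x ⊔ y) = y
    rw [inf_top_eq, star' x (x ⊔ y) le_sup_left, sup_comm (c x) x, compl_sup, top_inf_eq,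
      star' y (x ⊔ y) le_sup_right]
end

section
/- Let L be a member of V. Then the relation Θ := {(x,y) ∈ L² | (x∧y)∨(x∨y)' = 1} satisfies: (x,y) ∈ Θ if and only if x = y. More generally, for any congruence Θ on L, if (x∧y)∨(x∨y)' belongs to the congruence class of 1 then (x,y) ∈ Θ. -/
theorem V_congruence_description
    {L : Type*} [Lattice L] [BoundedOrder L] (c : L → L)
    (compl_sup : ∀ x : L, x ⊔ c x = ⊤) (compl_inf : ∀ x : L, x ⊓ c x = ⊥)
    (id_b : ∀ x y : L, x ⊔ c y = c y ⊔ ((x ⊔ c y) ⊓ y))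
    (id_e : ∀ x y : L, x ⊓ y = x ⊓ ((x ⊓ y) ⊔ c x)) :
    (∀ x y : L, (x ⊓ y) ⊔ c (x ⊔ y) = ⊤ ↔ x = y) ∧
    (∀ r : L → L → Prop, Equivalence r →
      (∀ a b a' b' : L, r a b → r a' b' → r (a ⊔ a') (b ⊔ b')) →
      (∀ a b a' b' : L, r a b → r a' b' → r (a ⊓ a') (b ⊓ b')) →
      (∀ a b : L, r a b → r (c a) (c b)) →
      ∀ x y : L, r ((x ⊓ y) ⊔ c (x ⊔ y)) ⊤ → r x y) := by
  have key : ∀ x y : L, x ⊓ ((x ⊓ y) ⊔ c (x ⊔ y)) = x ⊓ y := by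
    intro x y
    have h1 : (x ⊔ y) ⊓ (x ⊓ y) = x ⊓ y :=
      inf_eq_right.2 (le_trans inf_le_left le_sup_left)
    have h2 : (x ⊔ y) ⊓ ((x ⊓ y) ⊔ c (x ⊔ y)) = x ⊓ y := by
      have := id_e (x ⊔ y) (x ⊓ y)
      rw [h1] at this
      exact this.symm
    calc x ⊓ ((x ⊓ y) ⊔ c (x ⊔ y))
        = (x ⊓ (x ⊔ y)) ⊓ ((x ⊓ y) ⊔ c (x ⊔ y)) := by
          rw [inf_eq_left.2 (le_sup_left : x ≤ x ⊔ y)]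
      _ = x ⊓ ((x ⊔ y) ⊓ ((x ⊓ y) ⊔ c (x ⊔ y))) := by rw [inf_assoc]
      _ = x ⊓ (x ⊓ y) := by rw [h2]
      _ = x ⊓ y := by rw [← inf_assoc, inf_idem]
  have key' : ∀ x y : L, y ⊓ ((x ⊓ y) ⊔ c (x ⊔ y)) = x ⊓ y := by
    intro x y
    have := key y x
    rwa [inf_comm y x, sup_comm y x] at this
  have part2 : ∀ r : L → L → Prop, Equivalence r →
      (∀ a b a' b' : L, r a b → r a' b' → r (a ⊔ a') (b ⊔ b')) →
      (∀ a b a' b' : L, r a b → r a' b' → r (a ⊓ a') (b ⊓ b')) →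
      (∀ a b : L, r a b → r (c a) (c b)) →
      ∀ x y : L, r ((x ⊓ y) ⊔ c (x ⊔ y)) ⊤ → r x y := by
    intro r hr hsup hinf hc x y h
    have hx : r (x ⊓ ((x ⊓ y) ⊔ c (x ⊔ y))) (x ⊓ ⊤) := hinf _ _ _ _ (hr.refl x) h
    have hy : r (y ⊓ ((x ⊓ y) ⊔ c (x ⊔ y))) (y ⊓ ⊤) := hinf _ _ _ _ (hr.refl y) h
    rw [key, inf_top_eq] at hx
    rw [key', inf_top_eq] at hy
    exact hr.trans (hr.symm hx) hy
  refine ⟨fun x y => ⟨fun h => ?_, fun h => ?_⟩, part2⟩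
  · exact part2 Eq eq_equivalence (fun a b a' b' h1 h2 => by rw [h1, h2])
      (fun a b a' b' h1 h2 => by rw [h1, h2]) (fun a b h1 => by rw [h1]) x y h
  · subst h; rw [inf_idem, sup_idem]; exact compl_sup x
end

section
/- The lattice M₃ (five elements 0 < a,b,c < 1 with a,b,c pairwise incomparable) with complementation defined by 0' = 1, a' = b, b' = c, c' = a, 1' = 0 satisfies the identities of V (i.e., the Sasaki operations form an adjoint pair on it), but the complementation is not an involution since (a')' ≠ a. -/
theorem M3_in_V_complementation_not_involution
    {L : Type*} [Lattice L] [BoundedOrder L] (a b c0 : L) (f : L → L)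
    (huniv : ∀ x : L, x = ⊥ ∨ x = a ∨ x = b ∨ x = c0 ∨ x = ⊤)
    (hab : a ≠ b) (hac : a ≠ c0) (hbc : b ≠ c0)
    (ha_bot : a ≠ ⊥) (hb_bot : b ≠ ⊥) (hc_bot : c0 ≠ ⊥)
    (ha_top : a ≠ ⊤) (hb_top : b ≠ ⊤) (hc_top : c0 ≠ ⊤)
    (hsup_ab : a ⊔ b = ⊤) (hsup_ac : a ⊔ c0 = ⊤) (hsup_bc : b ⊔ c0 = ⊤)
    (hinf_ab : a ⊓ b = ⊥) (hinf_ac : a ⊓ c0 = ⊥) (hinf_bc : b ⊓ c0 = ⊥)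
    (hf_bot : f ⊥ = ⊤) (hf_a : f a = b) (hf_b : f b = c0) (hf_c : f c0 = a)
    (hf_top : f ⊤ = ⊥) :
    (∀ x : L, x ⊔ f x = ⊤) ∧ (∀ x : L, x ⊓ f x = ⊥) ∧
    (∀ x y : L, x ⊔ f y = f y ⊔ ((x ⊔ f y) ⊓ y)) ∧
    (∀ x y : L, x ⊓ y = x ⊓ ((x ⊓ y) ⊔ f x)) ∧
    (∀ x y z : L, (x ⊔ f y) ⊓ y ≤ z ↔ x ≤ f y ⊔ (y ⊓ z)) ∧
    f (f a) ≠ a := by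
  have hsup_ba : b ⊔ a = ⊤ := by rw [sup_comm]; exact hsup_ab
  have hsup_ca : c0 ⊔ a = ⊤ := by rw [sup_comm]; exact hsup_ac
  have hsup_cb : c0 ⊔ b = ⊤ := by rw [sup_comm]; exact hsup_bc
  have hinf_ba : b ⊓ a = ⊥ := by rw [inf_comm]; exact hinf_ab
  have hinf_ca : c0 ⊓ a = ⊥ := by rw [inf_comm]; exact hinf_ac
  have hinf_cb : c0 ⊓ b = ⊥ := by rw [inf_comm]; exact hinf_bc
  have nab : ¬ a ≤ b := fun h => ha_bot (by rw [← hinf_ab, inf_eq_left.mpr h])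
  have nba : ¬ b ≤ a := fun h => hb_bot (by rw [← hinf_ba, inf_eq_left.mpr h])
  have nac : ¬ a ≤ c0 := fun h => ha_bot (by rw [← hinf_ac, inf_eq_left.mpr h])
  have nca : ¬ c0 ≤ a := fun h => hc_bot (by rw [← hinf_ca, inf_eq_left.mpr h])
  have nbc : ¬ b ≤ c0 := fun h => hb_bot (by rw [← hinf_bc, inf_eq_left.mpr h])
  have ncb : ¬ c0 ≤ b := fun h => hc_bot (by rw [← hinf_cb, inf_eq_left.mpr h])
  have nta : ¬ (⊤:L) ≤ a := fun h => ha_top (top_le_iff.mp h)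
  have ntb : ¬ (⊤:L) ≤ b := fun h => hb_top (top_le_iff.mp h)
  have ntc : ¬ (⊤:L) ≤ c0 := fun h => hc_top (top_le_iff.mp h)
  have nab' : ¬ a ≤ (⊥:L) := fun h => ha_bot (le_bot_iff.mp h)
  have nbb' : ¬ b ≤ (⊥:L) := fun h => hb_bot (le_bot_iff.mp h)
  have ncb' : ¬ c0 ≤ (⊥:L) := fun h => hc_bot (le_bot_iff.mp h)
  refine ⟨?_, ?_, ?_, ?_, ?_, ?_⟩
  · intro x
    rcases huniv x with h | h | h | h | h <;> subst h <;>
      simp [hf_bot, hf_a, hf_b, hf_c, hf_top, hsup_ab, hsup_bc, hsup_ca]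
  · intro x
    rcases huniv x with h | h | h | h | h <;> subst h <;>
      simp [hf_bot, hf_a, hf_b, hf_c, hf_top, hinf_ab, hinf_bc, hinf_ca]
  · intro x y
    rcases huniv x with h | h | h | h | h <;> subst h <;>
      rcases huniv y with h | h | h | h | h <;> subst h <;>
      simp [hf_bot, hf_a, hf_b, hf_c, hf_top, hsup_ab, hsup_ac, hsup_bc,
        hsup_ba, hsup_ca, hsup_cb, hinf_ab, hinf_ac, hinf_bc, hinf_ba, hinf_ca, hinf_cb]
  · intro x y
    rcases huniv x with h | h | h | h | h <;> subst h <;>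
      rcases huniv y with h | h | h | h | h <;> subst h <;>
      simp [hf_bot, hf_a, hf_b, hf_c, hf_top, hsup_ab, hsup_ac, hsup_bc,
        hsup_ba, hsup_ca, hsup_cb, hinf_ab, hinf_ac, hinf_bc, hinf_ba, hinf_ca, hinf_cb]
  · intro x y z
    rcases huniv x with h | h | h | h | h <;> subst h <;>
      rcases huniv y with h | h | h | h | h <;> subst h <;>
      rcases huniv z with h | h | h | h | h <;> subst h <;>
      simp [hf_bot, hf_a, hf_b, hf_c, hf_top, hsup_ab, hsup_ac, hsup_bc,
        hsup_ba, hsup_ca, hsup_cb, hinf_ab, hinf_ac, hinf_bc, hinf_ba, hinf_ca, hinf_cb,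
        nab, nba, nac, nca, nbc, ncb, nta, ntb, ntc, nab', nbb', ncb']
  · rw [hf_a, hf_b]; exact fun h => hac h.symm
end

section
/- For n ≥ 3, let Mₙ be the lattice with elements 0 < a₁,...,aₙ < 1, the aᵢ pairwise incomparable, and let π be a fixed-point-free permutation of {a₁,...,aₙ}. Define 0' := 1, 1' := 0, aᵢ' := π(aᵢ). Then (Mₙ,∨,∧,',0,1) is a member of the variety V, i.e., the Sasaki operations form an adjoint pair on it. -/
theorem Mn_with_fixed_point_free_permutation_in_V
    {L : Type*} [Lattice L] [BoundedOrder L] (n : ℕ) (hn : 3 ≤ n)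
    (a : Fin n → L) (π : Equiv.Perm (Fin n)) (f : L → L)
    (ha_inj : Function.Injective a)
    (ha_bot : ∀ i, a i ≠ ⊥) (ha_top : ∀ i, a i ≠ ⊤)
    (hbot_top : (⊥ : L) ≠ ⊤)
    (huniv : ∀ x : L, x = ⊥ ∨ x = ⊤ ∨ ∃ i, x = a i)
    (hsup : ∀ i j, i ≠ j → a i ⊔ a j = ⊤)
    (hinf : ∀ i j, i ≠ j → a i ⊓ a j = ⊥)
    (hπ : ∀ i, π i ≠ i)
    (hf_bot : f ⊥ = ⊤) (hf_top : f ⊤ = ⊥) (hf_a : ∀ i, f (a i) = a (π i)) :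
    (∀ x : L, x ⊔ f x = ⊤) ∧ (∀ x : L, x ⊓ f x = ⊥) ∧
    (∀ x y : L, x ⊔ f y = f y ⊔ ((x ⊔ f y) ⊓ y)) ∧
    (∀ x y : L, x ⊓ y = x ⊓ ((x ⊓ y) ⊔ f x)) ∧
    (∀ x y z : L, (x ⊔ f y) ⊓ y ≤ z ↔ x ≤ f y ⊔ (y ⊓ z)) := by
  have h1 : ∀ x : L, x ⊔ f x = ⊤ := by
    intro x
    rcases huniv x with rfl | rfl | ⟨i, rfl⟩
    · simp [hf_bot]
    · simp [hf_top]
    · rw [hf_a]; exact hsup i (π i) (fun h => hπ i (h.symm))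
  have h2 : ∀ x : L, x ⊓ f x = ⊥ := by
    intro x
    rcases huniv x with rfl | rfl | ⟨i, rfl⟩
    · simp [hf_bot]
    · simp [hf_top]
    · rw [hf_a]; exact hinf i (π i) (fun h => hπ i (h.symm))
  have h3 : ∀ x y : L, x ⊔ f y = f y ⊔ ((x ⊔ f y) ⊓ y) := by
    intro x y
    rcases huniv y with rfl | rfl | ⟨j, rfl⟩
    · simp [hf_bot]
    · simp [hf_top]
    · rw [hf_a]
      rcases huniv x with rfl | rfl | ⟨i, rfl⟩
      · simp [hinf (π j) j (hπ j)]
      · simp [hsup (π j) j (hπ j)]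
      · by_cases hij : i = π j
        · subst hij
          simp [hinf (π j) j (hπ j)]
        · rw [hsup i (π j) hij]
          simp [hsup (π j) j (hπ j)]
  have h4 : ∀ x y : L, x ⊓ y = x ⊓ ((x ⊓ y) ⊔ f x) := by
    intro x y
    rcases huniv x with rfl | rfl | ⟨i, rfl⟩
    · simp
    · simp [hf_top]
    · rw [hf_a]
      rcases huniv y with rfl | rfl | ⟨j, rfl⟩
      · simp [hinf i (π i) (fun h => hπ i h.symm)]
      · simp [hsup i (π i) (fun h => hπ i h.symm)]
      · by_cases hij : j = i
        · subst hij; simp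
        · rw [hinf i j (fun h => hij h.symm)]
          simp [hinf i (π i) (fun h => hπ i h.symm)]
  refine ⟨h1, h2, h3, h4, fun x y z => ?_⟩
  constructor
  · intro h
    calc x ≤ x ⊔ f y := le_sup_left
      _ = f y ⊔ ((x ⊔ f y) ⊓ y) := h3 x y
      _ ≤ f y ⊔ (y ⊓ z) := sup_le_sup_left (le_inf inf_le_right h) _
  · intro h
    have key : (f y ⊔ (y ⊓ z)) ⊓ y = y ⊓ z := by
      rw [inf_comm, sup_comm, ← h4 y z]
    calc (x ⊔ f y) ⊓ y ≤ ((f y ⊔ (y ⊓ z)) ⊔ f y) ⊓ y :=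
          inf_le_inf_right _ (sup_le_sup_right h _)
      _ = (f y ⊔ (y ⊓ z)) ⊓ y := by rw [sup_comm (f y ⊔ (y ⊓ z)) (f y), ← sup_assoc, sup_idem]
      _ = y ⊓ z := key
      _ ≤ z := inf_le_right
end

section
/- In every member of V the following cancellation holds: if u := (x∧y)∨(x∨y)' satisfies u = 1, then x = y. -/
theorem V_cancellation
    {L : Type*} [Lattice L] [BoundedOrder L] (c : L → L)
    (compl_sup : ∀ x : L, x ⊔ c x = ⊤) (compl_inf : ∀ x : L, x ⊓ c x = ⊥)
    (id_b : ∀ x y : L, x ⊔ c y = c y ⊔ ((x ⊔ c y) ⊓ y))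
    (id_e : ∀ x y : L, x ⊓ y = x ⊓ ((x ⊓ y) ⊔ c x)) :
    ∀ x y : L, (x ⊓ y) ⊔ c (x ⊔ y) = ⊤ → x = y := by
  intro x y h
  have key : ∀ z : L, z ≤ x ⊔ y → x ⊓ y ≤ z → z = x ⊔ y := by
    intro z hz1 hz2
    have h1 : (x ⊔ y) ⊓ z = z := inf_eq_right.mpr hz1
    have h2 : ((x ⊔ y) ⊓ z) ⊔ c (x ⊔ y) = ⊤ := by
      rw [h1]
      exact eq_top_iff.mpr (h ▸ sup_le_sup_right hz2 _)
    have := id_e (x ⊔ y) z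
    rw [h2, inf_top_eq] at this
    rw [h1] at this
    exact this
  have hx := key x le_sup_left inf_le_left
  have hy := key y le_sup_right inf_le_right
  exact hx.trans hy.symm
end
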